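/- arXiv:1505.06602 — 5 statements merged into one kernel-verified Lean document; each statement's English description precedes it below -/
import Mathlib

section
/- The set Λ≥_{ℤ×} of weakly decreasing integer vectors with all entries nonzero is an increasing subset of the poset (Λ≥, ≽): if μ ∈ Λ≥_{ℤ×} and λ ≽ μ, then λ ∈ Λ≥_{ℤ×}. -/
/-- Weakly decreasing vectors (elements of `Λ≥`). -/
def WkDec {n : ℕ} (v : Fin n → ℚ) : Prop := ∀ i j : Fin n, i ≤ j → v j ≤ v i

/-- One step of the Penkov–Serganova Bruhat order: add a positive root `εᵢ − εⱼ`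
orthogonal to the weight, staying weakly decreasing. -/
def PSStep {n : ℕ} (v w : Fin n → ℚ) : Prop :=
  WkDec v ∧ WkDec w ∧ ∃ i j : Fin n, i < j ∧ v i + v j = 0 ∧
    w = fun k => v k + (if k = i then 1 else 0) - (if k = j then 1 else 0)

/-- `PSLE μ λ` means `λ ≽ μ` in the Penkov–Serganova Bruhat order on `Λ≥`. -/
def PSLE {n : ℕ} (mu lam : Fin n → ℚ) : Prop :=
  WkDec mu ∧ WkDec lam ∧ Relation.ReflTransGen PSStep mu lam

/-- `Λ≥_{ℤ×}` is an increasing subset of `(Λ≥, ≽)`. -/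
theorem intNonzero_increasing {n : ℕ} (lam mu : Fin n → ℚ)
    (hmuInt : ∀ i, ∃ k : ℤ, mu i = (k : ℚ)) (hmu0 : ∀ i, mu i ≠ 0)
    (h : PSLE mu lam) :
    (∀ i, ∃ k : ℤ, lam i = (k : ℚ)) ∧ ∀ i, lam i ≠ 0 := by

  obtain ⟨_, _, hrt⟩ := h
  induction hrt with
  | refl => exact ⟨hmuInt, hmu0⟩
  | tail hab hbc ih =>
    rename_i b c _
    obtain ⟨hbdec, _, i, j, hij, horth, heq⟩ := hbc
    obtain ⟨hInt, h0⟩ := ih hbdec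
    have hbi : 0 < b i := by
      have h1 : b j ≤ b i := hbdec i j (le_of_lt hij)
      have h2 : b i = -(b j) := by linarith
      rcases lt_trichotomy (b i) 0 with h|h|h
      · exfalso; have : 0 < b j := by linarith
        linarith
      · exact absurd h (h0 i)
      · exact h
    have hbj : b j < 0 := by linarith
    constructor
    · intro k
      obtain ⟨m, hm⟩ := hInt k
      by_cases hki : k = i
      · by_cases hkj : k = j
        · subst hki; exact absurd hkj (ne_of_lt hij)
        · exact ⟨m + 1, by subst hki; simp [heq, hkj, hm, ne_of_lt hij, (ne_of_lt hij).symm]⟩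
      · by_cases hkj : k = j
        · exact ⟨m - 1, by subst hkj; simp [heq, hki, hm, (ne_of_lt hij).symm]⟩
        · exact ⟨m, by simp [heq, hki, hkj, hm]⟩
    · intro k
      by_cases hki : k = i
      · subst hki; simp only [heq]
        have : k ≠ j := ne_of_lt hij
        simp [this]; linarith
      · by_cases hkj : k = j
        · subst hkj; simp only [heq]; simp [hki]; linarith
        · simp only [heq]; simp [hki, hkj]; exact h0 k
end

section
/- For λ, μ ∈ Λ≥_{½+ℤ} (weakly decreasing half-integer vectors), λ ≽ μ in the Bruhat order if and only if λ♯ ≽ μ♯ in the Bruhat order on weakly decreasing integer vectors. -/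
/-- The map `♯` sending `λᵢ` to `λᵢ + sgn(λᵢ)·½`. -/
def sharpQ {n : ℕ} (lam : Fin n → ℚ) : Fin n → ℚ :=
  fun i => lam i + (if 0 < lam i then (1 : ℚ) / 2 else -(1 / 2))

def sh (a : ℚ) : ℚ := a + (if 0 < a then (1 : ℚ) / 2 else -(1 / 2))

def HalfInt {n : ℕ} (v : Fin n → ℚ) : Prop := ∀ i, ∃ k : ℤ, v i = (k : ℚ) + 1 / 2

lemma half_ne_zero {a : ℚ} (h : ∃ k : ℤ, a = (k : ℚ) + 1 / 2) : a ≠ 0 := by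
  obtain ⟨k, rfl⟩ := h
  intro h0
  have h1 : ((2 * k + 1 : ℤ) : ℚ) = 0 := by push_cast; linarith
  have h2 : (2 * k + 1 : ℤ) = 0 := by exact_mod_cast h1
  omega

lemma sh_le_sh {a b : ℚ} (ha : a ≠ 0) (hb : b ≠ 0) : a ≤ b ↔ sh a ≤ sh b := by
  unfold sh
  rcases ha.lt_or_gt with h | h <;> rcases hb.lt_or_gt with h' | h'
  · rw [if_neg (asymm h), if_neg (asymm h')]; constructor <;> intro <;> linarith
  · rw [if_neg (asymm h), if_pos h']; constructor <;> intro <;> linarith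
  · rw [if_pos h, if_neg (asymm h')]; constructor <;> intro <;> linarith
  · rw [if_pos h, if_pos h']; constructor <;> intro <;> linarith

lemma sh_inj {a b : ℚ} (ha : a ≠ 0) (hb : b ≠ 0) (h : sh a = sh b) : a = b :=
  le_antisymm ((sh_le_sh ha hb).2 h.le) ((sh_le_sh hb ha).2 h.ge)

lemma sh_sum {a b : ℚ} (ha : a ≠ 0) (hb : b ≠ 0) (hba : b ≤ a) :
    a + b = 0 ↔ sh a + sh b = 0 := by
  unfold sh
  rcases ha.lt_or_gt with h | h <;> rcases hb.lt_or_gt with h' | h'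
  · rw [if_neg (asymm h), if_neg (asymm h')]; constructor <;> intro <;> linarith
  · rw [if_neg (asymm h), if_pos h']; constructor <;> intro <;> linarith
  · rw [if_pos h, if_neg (asymm h')]; constructor <;> intro <;> linarith
  · rw [if_pos h, if_pos h']; constructor <;> intro <;> linarith

lemma sh_add_one {a : ℚ} (ha : 0 < a) : sh (a + 1) = sh a + 1 := by
  unfold sh; rw [if_pos (by linarith), if_pos ha]; ring

lemma sh_sub_one {a : ℚ} (ha : a < 0) : sh (a - 1) = sh a - 1 := by
  unfold sh; rw [if_neg (by intro hc; linarith), if_neg (asymm ha)]; ring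

lemma sharpQ_apply {n : ℕ} (v : Fin n → ℚ) (i : Fin n) : sharpQ v i = sh (v i) := rfl

lemma wkdec_sharp_iff {n : ℕ} {v : Fin n → ℚ} (hv : HalfInt v) :
    WkDec v ↔ WkDec (sharpQ v) := by
  constructor <;> intro h i j hij
  · exact (sh_le_sh (half_ne_zero (hv j)) (half_ne_zero (hv i))).1 (h i j hij)
  · exact (sh_le_sh (half_ne_zero (hv j)) (half_ne_zero (hv i))).2 (h i j hij)

lemma step_sharp {n : ℕ} {v w : Fin n → ℚ} (hv : HalfInt v) (h : PSStep v w) :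
    HalfInt w ∧ PSStep (sharpQ v) (sharpQ w) := by
  obtain ⟨hwv, hww, i, j, hij, hsum, hw⟩ := h
  subst hw
  have hij' : i ≠ j := hij.ne
  have hle : v j ≤ v i := hwv i j hij.le
  have hpos : 0 < v i :=
    lt_of_le_of_ne (by linarith) (Ne.symm (half_ne_zero (hv i)))
  have hneg : v j < 0 := by linarith
  have hwhalf : HalfInt (fun k => v k + (if k = i then (1:ℚ) else 0) - (if k = j then 1 else 0)) := by
    intro k
    obtain ⟨m, hmk⟩ := hv k
    by_cases hki : k = i
    · exact ⟨m + 1, by simp only [if_pos hki, if_neg (hki ▸ hij')]; push_cast; linarith⟩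
    · by_cases hkj : k = j
      · exact ⟨m - 1, by simp only [if_neg hki, if_pos hkj]; push_cast; linarith⟩
      · exact ⟨m, by simp only [if_neg hki, if_neg hkj]; linarith⟩
  refine ⟨hwhalf, (wkdec_sharp_iff hv).1 hwv, (wkdec_sharp_iff hwhalf).1 hww,
    i, j, hij, ?_, ?_⟩
  · rw [sharpQ_apply, sharpQ_apply]
    exact (sh_sum (half_ne_zero (hv i)) (half_ne_zero (hv j)) hle).1 hsum
  · funext k
    simp only [sharpQ_apply]
    by_cases hki : k = i
    · subst hki
      simp only [if_pos rfl, if_neg hij', sub_zero, add_zero]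
      exact sh_add_one hpos
    · by_cases hkj : k = j
      · subst hkj
        rw [if_neg hki, if_pos rfl, add_zero, add_zero]
        exact sh_sub_one hneg
      · simp only [if_neg hki, if_neg hkj]; ring_nf

lemma path_sharp {n : ℕ} {v w : Fin n → ℚ} (hv : HalfInt v)
    (h : Relation.ReflTransGen PSStep v w) :
    HalfInt w ∧ Relation.ReflTransGen PSStep (sharpQ v) (sharpQ w) := by
  induction h with
  | refl => exact ⟨hv, .refl⟩
  | tail h1 h2 ih =>
    obtain ⟨hb, hp⟩ := ih
    obtain ⟨hc, hs⟩ := step_sharp hb h2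
    exact ⟨hc, hp.tail hs⟩

lemma step_unsharp {n : ℕ} {b : Fin n → ℚ} {C : Fin n → ℚ} (hb : HalfInt b)
    (h : PSStep (sharpQ b) C) :
    ∃ c, HalfInt c ∧ C = sharpQ c ∧ PSStep b c := by
  obtain ⟨h1, h2, i, j, hij, hsum, hC⟩ := h
  have hij' : i ≠ j := hij.ne
  have hwb : WkDec b := (wkdec_sharp_iff hb).2 h1
  have hle : b j ≤ b i := hwb i j hij.le
  have hbsum : b i + b j = 0 :=
    (sh_sum (half_ne_zero (hb i)) (half_ne_zero (hb j)) hle).2 hsum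
  have hpos : 0 < b i :=
    lt_of_le_of_ne (by linarith) (Ne.symm (half_ne_zero (hb i)))
  have hneg : b j < 0 := by linarith
  have hchalf : HalfInt (fun k => b k + (if k = i then (1:ℚ) else 0) - (if k = j then 1 else 0)) := by
    intro k
    obtain ⟨m, hmk⟩ := hb k
    by_cases hki : k = i
    · exact ⟨m + 1, by simp only [if_pos hki, if_neg (hki ▸ hij')]; push_cast; linarith⟩
    · by_cases hkj : k = j
      · exact ⟨m - 1, by simp only [if_neg hki, if_pos hkj]; push_cast; linarith⟩
      · exact ⟨m, by simp only [if_neg hki, if_neg hkj]; linarith⟩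
  have hCeq : C = sharpQ (fun k => b k + (if k = i then (1:ℚ) else 0) - (if k = j then 1 else 0)) := by
    rw [hC]
    funext k
    simp only [sharpQ_apply]
    by_cases hki : k = i
    · subst hki
      simp only [if_pos rfl, if_neg hij', sub_zero, add_zero]
      exact (sh_add_one hpos).symm
    · by_cases hkj : k = j
      · subst hkj
        rw [if_neg hki, if_pos rfl, add_zero, add_zero]
        exact (sh_sub_one hneg).symm
      · simp only [if_neg hki, if_neg hkj]; ring_nf
  have hwc : WkDec (fun k => b k + (if k = i then (1:ℚ) else 0) - (if k = j then 1 else 0)) :=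
    (wkdec_sharp_iff hchalf).2 (hCeq ▸ h2)
  exact ⟨_, hchalf, hCeq, hwb, hwc, i, j, hij, hbsum, rfl⟩

lemma path_unsharp {n : ℕ} {v : Fin n → ℚ} {W : Fin n → ℚ} (hv : HalfInt v)
    (h : Relation.ReflTransGen PSStep (sharpQ v) W) :
    ∃ w, HalfInt w ∧ W = sharpQ w ∧ Relation.ReflTransGen PSStep v w := by
  induction h with
  | refl => exact ⟨v, hv, rfl, .refl⟩
  | tail h1 h2 ih =>
    obtain ⟨b, hb, rfl, hp⟩ := ih
    obtain ⟨c, hc, rfl, hs⟩ := step_unsharp hb h2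
    exact ⟨c, hc, rfl, hp.tail hs⟩

/-- For weakly decreasing half-integer vectors, `λ ≽ μ` iff `λ♯ ≽ μ♯`. -/
theorem psle_iff_sharp_psle {n : ℕ} (lam mu : Fin n → ℚ)
    (hl : ∀ i, ∃ k : ℤ, lam i = (k : ℚ) + 1 / 2)
    (hm : ∀ i, ∃ k : ℤ, mu i = (k : ℚ) + 1 / 2) :
    PSLE mu lam ↔ PSLE (sharpQ mu) (sharpQ lam) := by
  constructor
  · rintro ⟨hm', hl', hpath⟩
    exact ⟨(wkdec_sharp_iff hm).1 hm', (wkdec_sharp_iff hl).1 hl',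
      (path_sharp hm hpath).2⟩
  · rintro ⟨hms, hls, hpath⟩
    obtain ⟨w, hw, heq, hp⟩ := path_unsharp hm hpath
    have hwl : w = lam := by
      funext i
      exact (sh_inj (half_ne_zero (hl i)) (half_ne_zero (hw i))
        (congrFun heq i)).symm
    subst hwl
    exact ⟨(wkdec_sharp_iff hm).2 hms, (wkdec_sharp_iff hw).2 hls, hp⟩
end

section
/- Let λ, μ be weakly decreasing integer vectors with λ = μ + εᵢ − εⱼ, i < j, μᵢ + μⱼ = 0, and set a = λᵢ (so a ≥ 1). Then for each 1 ≤ s ≤ n: wt_s(λ) − wt_s(μ) equals 0 if s ≤ i or s > j; equals δ_{a−1} − δ_a if i < s ≤ j and a > 1; and equals −δ₁ if i < s ≤ j and a = 1. In particular wt_s(λ) ≥ wt_s(μ) for all s and wt(λ) = wt(μ), i.e. λ ⪰ μ. -/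
/-- `δ_a` as an element of the free abelian group `P` on `{δ_r : r ∈ ℕ, r ≥ 1}`,
with the conventions `δ₀ = 0` and `δ_{−r} = −δ_r`. -/
def delta (a : ℤ) : ℕ → ℤ := fun r =>
  if r = 0 then 0 else (if (r : ℤ) = a then 1 else 0) - (if (r : ℤ) = -a then 1 else 0)

/-- The positive cone of `P` for type `b_∞`: nonnegative integer combinations of
`−δ₁` and `δ_r − δ_{r+1}` (`r ≥ 1`). -/
def BCone (v : ℕ → ℤ) : Prop :=
  ∃ c : ℕ →₀ ℕ, v = c.sum fun r k =>
    k • (if r = 0 then -(delta 1) else delta (r : ℤ) - delta ((r : ℤ) + 1))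

/-- `wt_s(λ) = Σ_{s ≤ i ≤ n} δ_{λᵢ}`. -/
def wts {n : ℕ} (lam : Fin n → ℤ) (s : Fin n) : ℕ → ℤ :=
  ∑ i ∈ Finset.univ.filter (fun i => s ≤ i), delta (lam i)

/-- Brundan's ordering `λ ⪰ μ`: `wt(λ) = wt(μ)` and `wt_s(λ) ≥ wt_s(μ)` for all `s`. -/
def BSucceq {n : ℕ} (lam mu : Fin n → ℤ) : Prop :=
  (∑ i : Fin n, delta (lam i)) = (∑ i : Fin n, delta (mu i)) ∧
    ∀ s : Fin n, BCone (wts lam s - wts mu s)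

lemma delta_neg (a : ℤ) : delta (-a) = -(delta a) := by
  funext r
  simp only [delta, Pi.neg_apply, neg_neg]
  split
  · ring
  · ring

lemma delta_zero' : delta 0 = 0 := by
  funext r
  simp [delta]

lemma bcone_zero : BCone 0 := ⟨0, by simp⟩

lemma bcone_step (a : ℤ) (ha : 1 < a) : BCone (delta (a - 1) - delta a) := by
  refine ⟨Finsupp.single (a - 1).toNat 1, ?_⟩
  rw [Finsupp.sum_single_index (by simp)]
  have h1 : (a - 1).toNat ≠ 0 := by omega
  have h2 : (((a - 1).toNat : ℤ)) = a - 1 := by omega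
  have h3 : a - 1 + 1 = a := by ring
  rw [if_neg h1, one_smul, h2, h3]

lemma bcone_neg_one : BCone (-(delta 1)) := by
  refine ⟨Finsupp.single 0 1, ?_⟩
  rw [Finsupp.sum_single_index (by simp)]
  simp

theorem wts_difference_of_step {n : ℕ} (lam mu : Fin n → ℤ)
    (hlam : ∀ i j : Fin n, i ≤ j → lam j ≤ lam i)
    (hmu : ∀ i j : Fin n, i ≤ j → mu j ≤ mu i)
    (i j : Fin n) (hij : i < j) (horth : mu i + mu j = 0)
    (hstep : lam = fun k => mu k + (if k = i then 1 else 0) - (if k = j then 1 else 0)) :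
    1 ≤ lam i ∧
    (∀ s : Fin n,
      ((s ≤ i ∨ j < s) → wts lam s - wts mu s = 0) ∧
      (i < s → s ≤ j → 1 < lam i →
        wts lam s - wts mu s = delta (lam i - 1) - delta (lam i)) ∧
      (i < s → s ≤ j → lam i = 1 → wts lam s - wts mu s = -(delta 1))) ∧
    BSucceq lam mu := by
  have hne : i ≠ j := ne_of_lt hij
  have hli : lam i = mu i + 1 := by rw [hstep]; simp [hne]
  have hlj : lam j = mu j - 1 := by rw [hstep]; simp [hne.symm]
  have hlk : ∀ k, k ≠ i → k ≠ j → lam k = mu k := by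
    intro k h1 h2; rw [hstep]; simp [h1, h2]
  have hmui : 0 ≤ mu i := by have := hmu i j hij.le; omega
  have ha : 1 ≤ lam i := by omega
  have hljv : lam j = -(lam i) := by omega
  have hmjv : mu j = -(lam i - 1) := by omega
  have key' : ∀ S : Finset (Fin n),
      (∑ k ∈ S, (delta (lam k) - delta (mu k))) =
        (if i ∈ S then delta (lam i) - delta (mu i) else 0) +
        (if j ∈ S then delta (lam j) - delta (mu j) else 0) := by
    intro S
    have hc : ∀ k ∈ S, delta (lam k) - delta (mu k) =
        (if k = i then delta (lam i) - delta (mu i) else 0) +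
        (if k = j then delta (lam j) - delta (mu j) else 0) := by
      intro k _
      by_cases h1 : k = i
      · subst h1; simp [hne]
      · by_cases h2 : k = j
        · subst h2; simp [h1]
        · rw [hlk k h1 h2]; simp [h1, h2]
    rw [Finset.sum_congr rfl hc, Finset.sum_add_distrib,
      Finset.sum_ite_eq' S i, Finset.sum_ite_eq' S j]
  have keyw : ∀ s : Fin n, wts lam s - wts mu s =
      (if s ≤ i then delta (lam i) - delta (mu i) else 0) +
      (if s ≤ j then delta (lam j) - delta (mu j) else 0) := by
    intro s
    have h0 : wts lam s - wts mu s =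
        ∑ k ∈ Finset.univ.filter (fun k => s ≤ k), (delta (lam k) - delta (mu k)) := by
      unfold wts; rw [Finset.sum_sub_distrib]
    rw [h0, key']
    simp
  -- the difference of the j-terms
  have hdj : delta (lam j) - delta (mu j) = delta (lam i - 1) - delta (lam i) := by
    rw [hljv, hmjv, delta_neg, delta_neg]
    abel
  have hdi : delta (lam i) - delta (mu i) = delta (lam i) - delta (lam i - 1) := by
    have : mu i = lam i - 1 := by omega
    rw [this]
  refine ⟨ha, ?_, ?_, ?_⟩
  · intro s
    refine ⟨?_, ?_, ?_⟩
    · rintro (hs | hs)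
      · rw [keyw s, if_pos hs, if_pos (hs.trans hij.le), hdj, hdi]
        abel
      · rw [keyw s, if_neg (not_le.mpr (hij.trans hs)),
          if_neg (not_le.mpr hs)]
        simp
    · intro h1 h2 _
      rw [keyw s, if_neg (not_le.mpr h1), if_pos h2, hdj]
      abel
    · intro h1 h2 hone
      rw [keyw s, if_neg (not_le.mpr h1), if_pos h2, hdj, hone]
      norm_num [delta_zero']
  · have h0 := key' Finset.univ
    simp only [Finset.mem_univ, if_true] at h0
    have : (∑ k : Fin n, delta (lam k)) - (∑ k : Fin n, delta (mu k)) = 0 := by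
      rw [← Finset.sum_sub_distrib, h0, hdj, hdi]
      abel
    linear_combination (norm := abel) this
  · intro s
    by_cases hs1 : s ≤ i
    · rw [keyw s, if_pos hs1, if_pos (hs1.trans hij.le), hdj, hdi]
      have : delta (lam i) - delta (lam i - 1) + (delta (lam i - 1) - delta (lam i)) = 0 := by
        abel
      rw [this]; exact bcone_zero
    · by_cases hs2 : s ≤ j
      · rw [keyw s, if_neg hs1, if_pos hs2, hdj, zero_add]
        by_cases hone : lam i = 1
        · rw [hone]
          have : delta (1 - 1 : ℤ) - delta 1 = -(delta 1) := by
            norm_num [delta_zero']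
          rw [this]; exact bcone_neg_one
        · exact bcone_step (lam i) (by omega)
      · rw [keyw s, if_neg hs1, if_neg hs2, add_zero]
        exact bcone_zero
end

section
/- Let λ, μ ∈ ℤⁿ be weakly decreasing with λ ⪰ μ (in the wt_s-ordering of type b_∞). Choose p with λᵢ, μᵢ ≥ 0 for i ≤ p and λⱼ, μⱼ ≤ 0 for j > p, and set bⱼ = −λ_{p+j}, b'ⱼ = −μ_{p+j} for 1 ≤ j ≤ n−p. Then bⱼ ≥ b'ⱼ for all j. -/
lemma delta_nonpos_apply (a : ℤ) (ha : a ≤ 0) (r : ℕ) (hr : 1 ≤ r) :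
    delta a r = -(if (r : ℤ) = -a then 1 else 0) := by
  unfold delta
  have h0 : r ≠ 0 := by omega
  have h1 : ¬((r : ℤ) = a) := by omega
  simp [h0, h1]

lemma sum_delta_Icc (a : ℤ) (ha : a ≤ 0) (N M : ℕ) (hN : 1 ≤ N) :
    ∑ r ∈ Finset.Icc N M, delta a r
      = -(if (N : ℤ) ≤ -a ∧ -a ≤ (M : ℤ) then 1 else 0) := by
  have key : ∀ r ∈ Finset.Icc N M, delta a r = -(if r = (-a).toNat then (1:ℤ) else 0) := by
    intro r hr
    rw [Finset.mem_Icc] at hr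
    rw [delta_nonpos_apply a ha r (le_trans hN hr.1)]
    have hiff : ((r : ℤ) = -a) = (r = (-a).toNat) := by
      apply propext; omega
    simp only [hiff]
  rw [Finset.sum_congr rfl key, Finset.sum_neg_distrib]
  congr 1
  rw [Finset.sum_ite_eq' (Finset.Icc N M) ((-a).toNat) (fun _ => (1:ℤ))]
  have : ((-a).toNat ∈ Finset.Icc N M) = ((N : ℤ) ≤ -a ∧ -a ≤ (M : ℤ)) := by
    apply propext
    rw [Finset.mem_Icc]; omega
  simp only [this]


lemma cone_apply (c : ℕ →₀ ℕ) (r : ℕ) (hr : 1 ≤ r) :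
    (c.sum fun r' k =>
      k • (if r' = 0 then -(delta 1) else delta (r' : ℤ) - delta ((r' : ℤ) + 1))) r
      = (c r : ℤ) - (c (r - 1) : ℤ) := by
  rw [Finsupp.sum, Finset.sum_apply]
  have step : ∀ (r' : ℕ) (k : ℕ), (k • (if r' = 0 then -(delta 1) else
        delta (r' : ℤ) - delta ((r' : ℤ) + 1))) r
      = (if r' = r then (k:ℤ) else 0) - (if r' = r - 1 then (k:ℤ) else 0) := by
    intro r' k
    rcases eq_or_ne r' 0 with h0 | h0
    · subst h0
      have hne : ¬((0:ℕ) = r) := by omega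
      by_cases hr1 : r = 1
      · subst hr1
        simp [delta]
      · have h2 : ¬((r:ℤ) = 1) := by omega
        have h3 : ¬((r:ℤ) = -1) := by omega
        have h4 : ¬((0:ℕ) = r - 1) := by omega
        simp [delta, hne, h2, h3, h4, (by omega : r ≠ 0)]
    · have h1 : r ≠ 0 := by omega
      have h2 : ¬((r : ℤ) = -(r' : ℤ)) := by omega
      have h3 : ¬((r : ℤ) = -((r' : ℤ) + 1)) := by omega
      have h4 : ((r : ℤ) = (r' : ℤ)) ↔ (r' = r) := by omega
      have h5 : ((r : ℤ) = (r' : ℤ) + 1) ↔ (r' = r - 1) := by omega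
      simp only [if_neg h0, Pi.smul_apply, Pi.sub_apply, delta, h1, if_false, h2, h3,
        sub_zero, h4, h5, smul_eq_mul, nsmul_eq_mul]
      have h8 : ¬(r = r - 1) := by omega
      have h9 : ¬(r - 1 = r) := by omega
      by_cases h6 : r' = r <;> by_cases h7 : r' = r - 1 <;>
        simp [h6, h7, h8, h9]
  rw [Finset.sum_congr rfl (fun r' _ => step r' (c r'))]
  rw [Finset.sum_sub_distrib]
  have e1 : ∀ b : ℕ, ∑ r' ∈ c.support, (if r' = b then (c r' : ℤ) else 0)
      = (c b : ℤ) := by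
    intro b
    rw [Finset.sum_ite_eq' c.support b (fun r' => ((c r' : ℤ)))]
    by_cases h : b ∈ c.support
    · simp [h]
    · simp [h, Finsupp.notMem_support_iff.mp h]
  have e2 : ∀ b : ℕ, ∑ r' ∈ c.support, (if r' = b then ((c r' : ℕ) : ℤ) else 0)
      = ∑ r' ∈ c.support, (if r' = b then (c b : ℤ) else 0) := by
    intro b
    refine Finset.sum_congr rfl fun x _ => ?_
    by_cases hx : x = b <;> simp [hx]
  rw [e2 r, e2 (r-1)]
  have e3 : ∀ b : ℕ, ∑ r' ∈ c.support, (if r' = b then (c b : ℤ) else 0)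
      = (c b : ℤ) := by
    intro b
    rw [Finset.sum_ite_eq' c.support b (fun _ => (c b : ℤ))]
    by_cases h : b ∈ c.support
    · simp [h]
    · simp [h, Finsupp.notMem_support_iff.mp h]
  rw [e3 r, e3 (r-1)]

lemma telescope (c : ℕ →₀ ℕ) (N : ℕ) (hN : 1 ≤ N) :
    ∀ M, N - 1 ≤ M →
      ∑ r ∈ Finset.Icc N M, ((c r : ℤ) - (c (r - 1) : ℤ))
        = (c M : ℤ) - (c (N - 1) : ℤ) := by
  intro M
  induction M with
  | zero =>
    intro hM
    have hN1 : N = 1 := by omega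
    subst hN1
    simp
  | succ M ih =>
    intro hM
    by_cases hNM : N ≤ M + 1
    · rw [Finset.sum_Icc_succ_top hNM, ih (by omega)]
      have h : M + 1 - 1 = M := by omega
      rw [h]; ring
    · have h1 : N = M + 2 := by omega
      rw [Finset.Icc_eq_empty (by omega)]
      have h2 : N - 1 = M + 1 := by omega
      rw [h2]; simp

/-- If  and the entries split into nonnegative (first ) and nonpositive parts,
then  for all . -/
theorem negative_parts_dominate {n : ℕ} (lam mu : Fin n → ℤ)
    (hlam : ∀ i j : Fin n, i ≤ j → lam j ≤ lam i)
    (hmu : ∀ i j : Fin n, i ≤ j → mu j ≤ mu i)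
    (h : BSucceq lam mu) (p : ℕ)
    (hpos : ∀ i : Fin n, (i : ℕ) < p → 0 ≤ lam i ∧ 0 ≤ mu i)
    (hneg : ∀ j : Fin n, p ≤ (j : ℕ) → lam j ≤ 0 ∧ mu j ≤ 0) :
    ∀ j : Fin n, p ≤ (j : ℕ) → -mu j ≤ -lam j := by
  intro j hj
  by_contra hcon
  push_neg at hcon
  have hlamj : lam j ≤ 0 := (hneg j hj).1
  have hmuj0 : mu j < 0 := by omega
  obtain ⟨c, hc⟩ := h.2 j
  set N : ℕ := (-mu j).toNat with hNdef
  have hN1 : 1 ≤ N := by omega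
  have hNcast : (N : ℤ) = -mu j := by omega
  set M : ℕ := c.support.sup id + 1 + N + ∑ i : Fin n, (-mu i).toNat with hMdef
  have hNleM : N ≤ M := by omega
  have hcM : c M = 0 := by
    rw [← Finsupp.notMem_support_iff]
    intro hmem
    have h1 : id M ≤ c.support.sup id := Finset.le_sup hmem
    simp only [id] at h1
    omega
  have E1 : ∑ r ∈ Finset.Icc N M, (wts lam j - wts mu j) r
      = (c M : ℤ) - (c (N - 1) : ℤ) := by
    rw [hc]
    rw [Finset.sum_congr rfl (fun r hr =>
      cone_apply c r (by rw [Finset.mem_Icc] at hr; omega))]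
    exact telescope c N hN1 M (by omega)
  have E2 : ∑ r ∈ Finset.Icc N M, (wts lam j - wts mu j) r
      = ∑ i ∈ Finset.univ.filter (fun i => j ≤ i),
          ((if (N : ℤ) ≤ -mu i ∧ -mu i ≤ (M : ℤ) then (1:ℤ) else 0)
            - (if (N : ℤ) ≤ -lam i ∧ -lam i ≤ (M : ℤ) then (1:ℤ) else 0)) := by
    have expand : ∀ r ∈ Finset.Icc N M, (wts lam j - wts mu j) r
        = ∑ i ∈ Finset.univ.filter (fun i => j ≤ i),
            (delta (lam i) r - delta (mu i) r) := by
      intro r _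
      simp only [Pi.sub_apply, wts, Finset.sum_apply]
      rw [Finset.sum_sub_distrib]
    rw [Finset.sum_congr rfl expand, Finset.sum_comm]
    refine Finset.sum_congr rfl fun i hi => ?_
    rw [Finset.mem_filter] at hi
    have hji : (j : ℕ) ≤ (i : ℕ) := hi.2
    have hip : p ≤ (i : ℕ) := le_trans hj hji
    rw [Finset.sum_sub_distrib, sum_delta_Icc (lam i) (hneg i hip).1 N M hN1,
      sum_delta_Icc (mu i) (hneg i hip).2 N M hN1]
    ring
  have E3 : (1:ℤ) ≤ ∑ i ∈ Finset.univ.filter (fun i => j ≤ i),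
          ((if (N : ℤ) ≤ -mu i ∧ -mu i ≤ (M : ℤ) then (1:ℤ) else 0)
            - (if (N : ℤ) ≤ -lam i ∧ -lam i ≤ (M : ℤ) then (1:ℤ) else 0)) := by
    have hjmem : j ∈ Finset.univ.filter (fun i => j ≤ i) := by
      simp
    have hmucond : ∀ i : Fin n, j ≤ i → ((N : ℤ) ≤ -mu i ∧ -mu i ≤ (M : ℤ)) := by
      intro i hji
      constructor
      · have := hmu j i hji
        omega
      · have hji' : (j : ℕ) ≤ (i : ℕ) := hji
        have hmi : mu i ≤ 0 := (hneg i (le_trans hj hji')).2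
        have hb : (-mu i).toNat ≤ ∑ i : Fin n, (-mu i).toNat :=
          Finset.single_le_sum (f := fun i => (-mu i).toNat)
            (fun _ _ => Nat.zero_le _) (Finset.mem_univ i)
        omega
    have hnonneg : ∀ i ∈ Finset.univ.filter (fun i => j ≤ i),
        (0:ℤ) ≤ (if (N : ℤ) ≤ -mu i ∧ -mu i ≤ (M : ℤ) then (1:ℤ) else 0)
          - (if (N : ℤ) ≤ -lam i ∧ -lam i ≤ (M : ℤ) then (1:ℤ) else 0) := by
      intro i hi
      rw [Finset.mem_filter] at hi
      rw [if_pos (hmucond i hi.2)]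
      split_ifs <;> norm_num
    have hvalj : (if (N : ℤ) ≤ -mu j ∧ -mu j ≤ (M : ℤ) then (1:ℤ) else 0)
        - (if (N : ℤ) ≤ -lam j ∧ -lam j ≤ (M : ℤ) then (1:ℤ) else 0) = 1 := by
      rw [if_pos (hmucond j le_rfl), if_neg (by omega)]
      norm_num
    calc (1:ℤ) = _ := hvalj.symm
      _ ≤ _ := Finset.single_le_sum hnonneg hjmem
  rw [E1] at E2
  have hc0 : (0:ℤ) ≤ (c (N - 1) : ℤ) := Int.ofNat_nonneg _
  rw [← E2, hcM] at E3
  simp at E3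
  omega
end

section
/- The map ♭ : Λ≥_{ℤ×}(p) → ℤ^{p|q}_≥, λ ↦ (−λ₁,…,−λ_p | λ_{p+1},…,λₙ), is injective, and its image is an increasing subset of (ℤ^{p|q}_≥, ⪰_a). -/
/-- `γ_a` as an element of the free abelian group on `{γ_r : r ∈ ℤ}`. -/
def gam (a : ℤ) : ℤ → ℤ := fun r => if r = a then 1 else 0

/-- The positive cone for `gl_∞`: nonnegative integer combinations of `γ_r − γ_{r+1}`. -/
def GCone (v : ℤ → ℤ) : Prop :=
  ∃ c : ℤ →₀ ℕ, v = c.sum fun r k => k • (gam r - gam (r + 1))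

/-- We model `ℤ^{p|q}` (with `p + q = n`) as `Fin n → ℤ`, where index `i < p`
corresponds to the `J(p|q)`-index `i − p ∈ {−p,…,−1}` (sign `−1`) and index `i ≥ p`
corresponds to `i − p + 1 ∈ {1,…,q}` (sign `+1`).
`wt_s(f) = Σ_{s ≤ i} sgn(i) γ_{f(i)}`. -/
def wtsA {n : ℕ} (p : ℕ) (f : Fin n → ℤ) (s : Fin n) : ℤ → ℤ :=
  ∑ i ∈ Finset.univ.filter (fun i => s ≤ i),
    (if (i : ℕ) < p then -(gam (f i)) else gam (f i))

/-- The Bruhat ordering `⪰_a` on `ℤ^{p|q}`. -/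
def ASucceq {n : ℕ} (p : ℕ) (f g : Fin n → ℤ) : Prop :=
  (∑ i : Fin n, (if (i : ℕ) < p then -(gam (f i)) else gam (f i))) =
      (∑ i : Fin n, (if (i : ℕ) < p then -(gam (g i)) else gam (g i))) ∧
    ∀ s : Fin n, GCone (wtsA p f s - wtsA p g s)

/-- The map `♭ : λ ↦ (−λ₁,…,−λ_p | λ_{p+1},…,λ_n)`. -/
def flat {n : ℕ} (p : ℕ) (lam : Fin n → ℤ) : Fin n → ℤ :=
  fun i => if (i : ℕ) < p then -lam i else lam i

/-- `Λ≥_{ℤ×}(p)`: weakly decreasing integer vectors, all entries nonzero,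
with exactly the first `p` entries positive. -/
def LamSet (n p : ℕ) : Set (Fin n → ℤ) :=
  {lam | (∀ i j : Fin n, i ≤ j → lam j ≤ lam i) ∧ (∀ i, lam i ≠ 0) ∧
    ∀ i : Fin n, ((i : ℕ) < p ↔ 0 < lam i)}

/-- `ℤ^{p|q}_≥`: increasing on the first block, decreasing on the second block. -/
def GDec {n : ℕ} (p : ℕ) (f : Fin n → ℤ) : Prop :=
  (∀ i j : Fin n, i ≤ j → (j : ℕ) < p → f i ≤ f j) ∧
    (∀ i j : Fin n, i ≤ j → p ≤ (i : ℕ) → f j ≤ f i)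

lemma gcone_zero : GCone 0 := ⟨0, by simp⟩

lemma sum_gam (s : Finset ℤ) (b : ℤ) : ∑ r ∈ s, gam b r = if b ∈ s then (1:ℤ) else 0 := by
  simp only [gam]
  rw [Finset.sum_ite_eq' s b (fun _ => (1:ℤ))]

-- key lemma
lemma key {n : ℕ} (T : Finset (Fin n)) (f g : Fin n → ℤ)
    (hf : ∀ i ∈ T, f i < 0)
    (hc : GCone (∑ i ∈ T, (gam (g i) - gam (f i)))) :
    ∀ i ∈ T, g i < 0 := by
  obtain ⟨c, hrep⟩ := hc
  set S : Finset ℤ := c.support ∪ T.image g ∪ T.image f ∪ {-1} with hS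
  have hne : S.Nonempty := ⟨-1, by simp [hS]⟩
  set m : ℤ := S.min' hne with hm
  have hmle : ∀ x ∈ S, m ≤ x := fun x hx => Finset.min'_le S x hx
  have hmg : ∀ i ∈ T, m ≤ g i := fun i hi =>
    hmle _ (by simp only [hS, Finset.mem_union]; exact Or.inl (Or.inl (Or.inr (Finset.mem_image_of_mem g hi))))
  have hmf : ∀ i ∈ T, m ≤ f i := fun i hi =>
    hmle _ (by simp only [hS, Finset.mem_union]; exact Or.inl (Or.inr (Finset.mem_image_of_mem f hi)))
  have hmc : ∀ b ∈ c.support, m ≤ b := fun b hb =>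
    hmle _ (by simp only [hS, Finset.mem_union]; exact Or.inl (Or.inl (Or.inl hb)))
  have hL : ∑ r ∈ Finset.Icc m (-1), (∑ i ∈ T, (gam (g i) - gam (f i))) r
      = ∑ i ∈ T, ((if g i ≤ -1 then (1:ℤ) else 0) - 1) := by
    simp only [Finset.sum_apply, Pi.sub_apply]
    rw [Finset.sum_comm]
    refine Finset.sum_congr rfl (fun i hi => ?_)
    rw [Finset.sum_sub_distrib, sum_gam, sum_gam]
    have h1 : (g i ∈ Finset.Icc m (-1)) ↔ g i ≤ -1 := by
      rw [Finset.mem_Icc]; exact ⟨fun h => h.2, fun h => ⟨hmg i hi, h⟩⟩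
    have h2 : f i ∈ Finset.Icc m (-1) := by
      rw [Finset.mem_Icc]; exact ⟨hmf i hi, by linarith [hf i hi]⟩
    rw [if_pos h2]
    congr 1
    simp [h1]
  have hR : 0 ≤ ∑ r ∈ Finset.Icc m (-1), (∑ i ∈ T, (gam (g i) - gam (f i))) r := by
    rw [hrep, Finsupp.sum]
    simp only [Finset.sum_apply, Pi.smul_apply, Pi.sub_apply]
    rw [Finset.sum_comm]
    refine Finset.sum_nonneg (fun b hb => ?_)
    simp only [nsmul_eq_mul]
    rw [← Finset.mul_sum, Finset.sum_sub_distrib, sum_gam, sum_gam]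
    have hb1 : (b ∈ Finset.Icc m (-1)) ↔ b ≤ -1 := by
      rw [Finset.mem_Icc]; exact ⟨fun h => h.2, fun h => ⟨hmc b hb, h⟩⟩
    have hb2 : (b + 1 ∈ Finset.Icc m (-1)) ↔ b + 1 ≤ -1 := by
      rw [Finset.mem_Icc]; exact ⟨fun h => h.2, fun h => ⟨by linarith [hmc b hb], h⟩⟩
    simp only [hb1, hb2]
    have : (0:ℤ) ≤ (if b ≤ -1 then (1:ℤ) else 0) - (if b + 1 ≤ -1 then 1 else 0) := by
      by_cases h : b + 1 ≤ -1
      · rw [if_pos h, if_pos (by linarith)]; norm_num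
      · rw [if_neg h]; split <;> norm_num
    exact mul_nonneg (by positivity) this
  rw [hL] at hR
  intro i hi
  by_contra hgi
  push_neg at hgi
  have hlt : ∑ j ∈ T, ((if g j ≤ -1 then (1:ℤ) else 0) - 1) < ∑ j ∈ T, (0:ℤ) := by
    refine Finset.sum_lt_sum (fun j _ => by split <;> norm_num) ⟨i, hi, ?_⟩
    rw [if_neg (by linarith)]; norm_num
  rw [Finset.sum_const_zero] at hlt
  linarith

/-- The map `♭` is injective on `Λ≥_{ℤ×}(p)` and its image is an increasing subset
of `(ℤ^{p|q}_≥, ⪰_a)`. -/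
theorem flat_injective_and_image_increasing (n p : ℕ) :
    Set.InjOn (flat p) (LamSet n p) ∧
      ∀ lam ∈ LamSet n p, ∀ g : Fin n → ℤ, GDec p g →
        ASucceq p g (flat p lam) → g ∈ flat p '' LamSet n p := by
  constructor
  · intro a _ b _ h
    funext i
    have h' := congrFun h i
    unfold flat at h'
    by_cases hp : (i : ℕ) < p
    · rw [if_pos hp, if_pos hp] at h'; linarith
    · rwa [if_neg hp, if_neg hp] at h'
  · rintro lam ⟨hdec, hnz, hpos⟩ g hgd ⟨E, hcone⟩
    set f := flat p lam with hfdef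
    set T₁ : Finset (Fin n) := Finset.univ.filter (fun i => (i : ℕ) < p) with hT1
    set T₂ : Finset (Fin n) := Finset.univ.filter (fun i => ¬ (i : ℕ) < p) with hT2
    -- f is negative everywhere
    have hfneg : ∀ i, f i < 0 := by
      intro i
      rw [hfdef]
      unfold flat
      by_cases hp : (i : ℕ) < p
      · rw [if_pos hp]; linarith [(hpos i).1 hp]
      · rw [if_neg hp]
        have h1 := hnz i
        have h2 : ¬ 0 < lam i := fun h => hp ((hpos i).2 h)
        omega
    -- rewrite E as split
    have esplit : ∀ h : Fin n → ℤ,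
        (∑ i : Fin n, (if (i : ℕ) < p then -(gam (h i)) else gam (h i)))
        = -(∑ i ∈ T₁, gam (h i)) + ∑ i ∈ T₂, gam (h i) := by
      intro h
      have hsplit := Finset.sum_filter_add_sum_filter_not (Finset.univ : Finset (Fin n))
        (fun i => (i : ℕ) < p) (fun i => if (i : ℕ) < p then -(gam (h i)) else gam (h i))
      rw [← hsplit, ← hT1, ← hT2, ← Finset.sum_neg_distrib]
      congr 1
      · exact Finset.sum_congr rfl (fun i hi => if_pos (Finset.mem_filter.mp hi).2)
      · exact Finset.sum_congr rfl (fun i hi => if_neg (Finset.mem_filter.mp hi).2)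
    rw [esplit g, esplit f] at E
    have hA12 : (∑ i ∈ T₁, (gam (g i) - gam (f i))) = ∑ i ∈ T₂, (gam (g i) - gam (f i)) := by
      rw [Finset.sum_sub_distrib, Finset.sum_sub_distrib]
      linear_combination -E
    have hA2 : GCone (∑ i ∈ T₂, (gam (g i) - gam (f i))) := by
      by_cases hpn : p < n
      · have hc := hcone ⟨p, hpn⟩
        have hfilt : Finset.univ.filter (fun i => (⟨p, hpn⟩ : Fin n) ≤ i) = T₂ := by
          ext i
          simp [hT2, Fin.le_def, Nat.not_lt]
        have hw : ∀ h : Fin n → ℤ, wtsA p h ⟨p, hpn⟩ = ∑ i ∈ T₂, gam (h i) := by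
          intro h
          unfold wtsA
          rw [hfilt]
          exact Finset.sum_congr rfl (fun i hi => if_neg (Finset.mem_filter.mp hi).2)
        rwa [hw g, hw f, ← Finset.sum_sub_distrib] at hc
      · have : T₂ = ∅ := by
          ext i
          simp only [hT2, Finset.mem_filter, Finset.mem_univ, true_and, Finset.notMem_empty,
            iff_false, not_not]
          omega
        rw [this, Finset.sum_empty]
        exact gcone_zero
    have hA1 : GCone (∑ i ∈ T₁, (gam (g i) - gam (f i))) := hA12 ▸ hA2
    have hg1 := key T₁ f g (fun i _ => hfneg i) hA1
    have hg2 := key T₂ f g (fun i _ => hfneg i) hA2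
    have hgneg : ∀ i, g i < 0 := by
      intro i
      by_cases hp : (i : ℕ) < p
      · exact hg1 i (by simp [hT1, hp])
      · exact hg2 i (by simp only [hT2, Finset.mem_filter, Finset.mem_univ, true_and]; exact hp)
    -- build mu
    set mu : Fin n → ℤ := fun i => if (i : ℕ) < p then -g i else g i with hmu
    have hmuval : ∀ i : Fin n, mu i = if (i : ℕ) < p then -g i else g i := fun _ => rfl
    refine ⟨mu, ⟨?_, ?_, ?_⟩, ?_⟩
    · intro i j hij
      rw [hmuval, hmuval]
      by_cases hj : (j : ℕ) < p
      · have hi : (i : ℕ) < p := lt_of_le_of_lt hij hj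
        rw [if_pos hi, if_pos hj]
        exact neg_le_neg (hgd.1 i j hij hj)
      · by_cases hi : (i : ℕ) < p
        · rw [if_pos hi, if_neg hj]
          have h1 := hgneg i
          have h2 := hgneg j
          omega
        · rw [if_neg hi, if_neg hj]
          exact hgd.2 i j hij (Nat.not_lt.mp hi)
    · intro i
      rw [hmuval]
      have := hgneg i
      split <;> omega
    · intro i
      rw [hmuval]
      have := hgneg i
      constructor
      · intro hp; rw [if_pos hp]; omega
      · intro hp
        by_contra hc
        rw [if_neg hc] at hp
        omega
    · funext i
      show (if (i : ℕ) < p then -mu i else mu i) = g i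
      rw [hmuval]
      by_cases hp : (i : ℕ) < p
      · rw [if_pos hp, if_pos hp, neg_neg]
      · rw [if_neg hp, if_neg hp]
end
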